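/- Fix a probability measure $\mu_0$ on $\mathbb{T}^d$ with smooth density and $\lambda \in [0,d)$. For any $\varepsilon > 0$ there exists $\delta > 0$ such that: if $\mu$ is a probability measure with smooth density on $\mathbb{T}^d$ with $\mathrm{supp}(\mu) \subset \mathrm{supp}(\mu_0)$ and $\sup_{\xi \neq 0}|\xi|^{\lambda/2}|\hat{\mu_0}(\xi) - \hat{\mu}(\xi)| \leq \delta$, then the Hausdorff distance between $\mathrm{supp}(\mu)$ and $\mathrm{supp}(\mu_0)$ is at most $\varepsilon$. -/

import Mathlib

open MeasureTheory Complex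

noncomputable section

/-- The `d`-dimensional torus `𝕋^d = ℝ^d/ℤ^d`. -/
abbrev Torus (d : ℕ) := Fin d → AddCircle (1:ℝ)

/-- The character `x ↦ e^{2πi ξ·x}` on the torus, for a frequency `ξ ∈ ℤ^d`. -/
noncomputable def ec {d : ℕ} (ξ : Fin d → ℤ) (x : Torus d) : ℂ :=
  (AddCircle.toCircle (∑ j, ξ j • x j) : ℂ)

/-- The Euclidean norm `|ξ|` of a frequency `ξ ∈ ℤ^d`. -/
noncomputable def znorm {d : ℕ} (ξ : Fin d → ℤ) : ℝ :=
  Real.sqrt (∑ j, ((ξ j : ℝ))^2)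

/-- The Fourier coefficient `μ̂(ξ) = ∫ e^{-2πi ξ·x} dμ(x)` of a measure on the torus. -/
noncomputable def mfc {d : ℕ} (μ : Measure (Torus d)) (ξ : Fin d → ℤ) : ℂ :=
  ∫ x, ec (-ξ) x ∂μ

/-- The canonical projection `ℝ^d → 𝕋^d`. -/
def torusCoe {d : ℕ} (x : Fin d → ℝ) : Torus d := fun j => (x j : AddCircle (1:ℝ))

/-- The (closed) support of a measure: points all of whose open neighbourhoods have
positive measure. -/
def msupport {d : ℕ} (μ : Measure (Torus d)) : Set (Torus d) :=
  {x | ∀ U : Set (Torus d), IsOpen U → x ∈ U → μ U ≠ 0}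

/-- A probability measure on `𝕋^d` with a smooth (nonnegative) density w.r.t. Haar measure. -/
def IsSmoothProb {d : ℕ} (μ : Measure (Torus d)) : Prop :=
  IsProbabilityMeasure μ ∧
    ∃ (h : Torus d → ℝ) (g : (Fin d → ℝ) → ℝ), ContDiff ℝ (⊤ : ℕ∞) g ∧ (∀ x, 0 ≤ g x) ∧
      (∀ x : Fin d → ℝ, h (torusCoe x) = g x) ∧
      μ = volume.withDensity (fun y => ENNReal.ofReal (h y))


/-! ### Auxiliary lemmas -/

namespace Stmt3Aux

variable {d : ℕ}

lemma ec_continuous (ξ : Fin d → ℤ) : Continuous (ec ξ) :=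
  continuous_subtype_val.comp <| AddCircle.continuous_toCircle.comp <|
    continuous_finset_sum _ fun j _ => (continuous_zsmul (ξ j)).comp (continuous_apply j)

lemma ec_zero (x : Torus d) : ec 0 x = 1 := by simp [ec]

lemma ec_add (ξ η : Fin d → ℤ) (x : Torus d) : ec (ξ + η) x = ec ξ x * ec η x := by
  simp only [ec, Pi.add_apply, add_zsmul, Finset.sum_add_distrib, AddCircle.toCircle_add,
    Circle.coe_mul]

lemma ec_conj (ξ : Fin d → ℤ) (x : Torus d) : (starRingEnd ℂ) (ec ξ x) = ec (-ξ) x := by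
  have hsum : ∑ j, (-ξ) j • x j = -∑ j, ξ j • x j := by
    rw [← Finset.sum_neg_distrib]
    exact Finset.sum_congr rfl fun j _ => by simp [neg_zsmul]
  have h : AddCircle.toCircle (-∑ j, ξ j • x j) = (AddCircle.toCircle (∑ j, ξ j • x j))⁻¹ := by
    apply eq_inv_of_mul_eq_one_left
    rw [← AddCircle.toCircle_add, neg_add_cancel, AddCircle.toCircle_zero]
  rw [ec, ← Circle.coe_inv_eq_conj, ← h, ← hsum, ec]

lemma ec_single (j : Fin d) (x : Torus d) :
    ec (Pi.single j 1) x = (AddCircle.toCircle (x j) : ℂ) := by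
  have : ∑ i, (Pi.single j (1:ℤ) : Fin d → ℤ) i • x i = x j := by
    rw [Finset.sum_eq_single j]
    · simp
    · intro b _ hb; simp [Pi.single_eq_of_ne hb]
    · simp
  rw [ec, this]

/-- The characters as continuous maps. -/
noncomputable def ecCM (ξ : Fin d → ℤ) : C(Torus d, ℂ) := ⟨ec ξ, ec_continuous ξ⟩

lemma ecCM_mul (ξ η : Fin d → ℤ) : ecCM ξ * ecCM η = ecCM (ξ + η) := by
  ext x; exact (ec_add ξ η x).symm

lemma ecCM_star (ξ : Fin d → ℤ) : star (ecCM ξ) = ecCM (-ξ) := by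
  ext x; exact ec_conj ξ x

/-- The space of trigonometric polynomials on the torus. -/
noncomputable def trigSpan (d : ℕ) : Submodule ℂ C(Torus d, ℂ) :=
  Submodule.span ℂ (Set.range (ecCM (d := d)))

lemma trigSpan_mul {f g : C(Torus d, ℂ)} (hf : f ∈ trigSpan d) (hg : g ∈ trigSpan d) :
    f * g ∈ trigSpan d := by
  have h : trigSpan d * trigSpan d ≤ trigSpan d := by
    rw [trigSpan, Submodule.span_mul_span]
    apply Submodule.span_mono
    rintro _ ⟨a, ⟨ξ, rfl⟩, b, ⟨η, rfl⟩, rfl⟩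
    exact ⟨ξ + η, (ecCM_mul ξ η).symm⟩
  exact h (Submodule.mul_mem_mul hf hg)

lemma trigSpan_one : (1 : C(Torus d, ℂ)) ∈ trigSpan d := by
  have : (1 : C(Torus d, ℂ)) = ecCM 0 := by ext x; exact (ec_zero x).symm
  rw [this]; exact Submodule.subset_span ⟨0, rfl⟩

lemma trigSpan_star {f : C(Torus d, ℂ)} (hf : f ∈ trigSpan d) : star f ∈ trigSpan d := by
  refine Submodule.span_induction ?_ ?_ ?_ ?_ hf
  · rintro _ ⟨ξ, rfl⟩; rw [ecCM_star]; exact Submodule.subset_span ⟨-ξ, rfl⟩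
  · rw [star_zero]; exact zero_mem _
  · intro a b _ _ ha hb; rw [star_add]; exact add_mem ha hb
  · intro c a _ ha
    rw [star_smul]
    exact Submodule.smul_mem _ _ ha

/-- Trigonometric polynomials as a star subalgebra of `C(𝕋^d, ℂ)`. -/
noncomputable def trigAlg (d : ℕ) : StarSubalgebra ℂ C(Torus d, ℂ) where
  carrier := trigSpan d
  mul_mem' := trigSpan_mul
  one_mem' := trigSpan_one
  add_mem' := add_mem
  zero_mem' := zero_mem _
  algebraMap_mem' := fun c => by
    rw [Algebra.algebraMap_eq_smul_one]
    exact Submodule.smul_mem _ _ trigSpan_one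
  star_mem' := trigSpan_star

lemma trigAlg_sep : (trigAlg d).SeparatesPoints := by
  intro x y hxy
  obtain ⟨j, hj⟩ := Function.ne_iff.mp hxy
  refine ⟨_, ⟨ecCM (Pi.single j 1), Submodule.subset_span ⟨_, rfl⟩, rfl⟩, ?_⟩
  show ec (Pi.single j 1) x ≠ ec (Pi.single j 1) y
  rw [ec_single, ec_single]
  intro h
  exact hj (AddCircle.injective_toCircle one_ne_zero (Circle.coe_injective h))

/-- Stone–Weierstrass: uniform approximation by trigonometric polynomials. -/
lemma trig_approx (f : C(Torus d, ℂ)) {η : ℝ} (hη : 0 < η) :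
    ∃ (n : ℕ) (c : Fin n → ℂ) (Ξ : Fin n → (Fin d → ℤ)),
      ∀ x, ‖f x - ∑ i, c i * ec (Ξ i) x‖ ≤ η := by
  have htop := ContinuousMap.starSubalgebra_topologicalClosure_eq_top_of_separatesPoints
    (trigAlg d) trigAlg_sep
  have hf : f ∈ closure (trigAlg d : Set C(Torus d, ℂ)) := by
    have : f ∈ (trigAlg d).topologicalClosure := htop ▸ trivial
    exact this
  obtain ⟨g, hgA, hgd⟩ := Metric.mem_closure_iff.mp hf η hη
  obtain ⟨n, c, v, hsum⟩ := Submodule.mem_span_set'.mp hgA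
  choose Ξ hΞ using fun i => (v i).2
  refine ⟨n, c, fun i => Ξ i, fun x => ?_⟩
  have hgx : g x = ∑ i, c i * ec (Ξ i) x := by
    rw [← hsum]
    rw [ContinuousMap.sum_apply]
    refine Finset.sum_congr rfl fun i _ => ?_
    rw [ContinuousMap.smul_apply, smul_eq_mul]
    congr 1
    exact (congrArg (fun h : C(Torus d, ℂ) => h x) (hΞ i)).symm
  calc ‖f x - ∑ i, c i * ec (Ξ i) x‖ = dist (f x) (g x) := by
        rw [hgx, dist_eq_norm]
      _ ≤ dist f g := ContinuousMap.dist_apply_le_dist x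
      _ ≤ η := hgd.le

lemma msupport_closed (μ : Measure (Torus d)) : IsClosed (msupport μ) := by
  rw [← isOpen_compl_iff]
  rw [isOpen_iff_forall_mem_open]
  intro x hx
  simp only [msupport, Set.mem_compl_iff, Set.mem_setOf_eq, not_forall] at hx
  obtain ⟨U, hUo, hxU, hU0⟩ := hx
  push_neg at hU0
  refine ⟨U, fun y hy => ?_, hUo, hxU⟩
  simp only [Set.mem_compl_iff, msupport, Set.mem_setOf_eq, not_forall]
  exact ⟨U, hUo, hy, by simpa using hU0⟩

lemma msupport_compl_null (μ : Measure (Torus d)) : μ (msupport μ)ᶜ = 0 := by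
  apply measure_null_of_locally_null
  intro x hx
  simp only [msupport, Set.mem_compl_iff, Set.mem_setOf_eq, not_forall] at hx
  obtain ⟨U, hUo, hxU, hU0⟩ := hx
  push_neg at hU0
  exact ⟨U, mem_nhdsWithin_of_mem_nhds (hUo.mem_nhds hxU), by simpa using hU0⟩

lemma open_inter_msupport (μ : Measure (Torus d)) {S : Set (Torus d)} (_hS : IsOpen S)
    (hμS : μ S ≠ 0) : (msupport μ ∩ S).Nonempty := by
  by_contra h
  rw [Set.not_nonempty_iff_eq_empty] at h
  apply hμS
  have hsub : S ⊆ (msupport μ)ᶜ := fun x hxS hxm =>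
    Set.eq_empty_iff_forall_notMem.mp h x ⟨hxm, hxS⟩
  exact measure_mono_null hsub (msupport_compl_null μ)

lemma msupport_ball_ne_zero (μ : Measure (Torus d)) {y : Torus d} (hy : y ∈ msupport μ)
    {r : ℝ} (hr : 0 < r) : μ (Metric.ball y r) ≠ 0 :=
  hy _ Metric.isOpen_ball (Metric.mem_ball_self hr)

lemma msupport_nonempty (μ : Measure (Torus d)) [IsProbabilityMeasure μ] :
    (msupport μ).Nonempty := by
  by_contra h
  rw [Set.not_nonempty_iff_eq_empty] at h
  have h0 : μ Set.univ = 0 := by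
    have hc : (msupport μ)ᶜ = Set.univ := by rw [h, Set.compl_empty]
    rw [← hc]; exact msupport_compl_null μ
  simp [measure_univ] at h0

lemma cont_integrable {f : Torus d → ℂ} (hf : Continuous f) (μ : Measure (Torus d))
    [IsProbabilityMeasure μ] : Integrable f μ :=
  hf.integrable_of_hasCompactSupport (HasCompactSupport.of_compactSpace f)

lemma cont_integrableR {f : Torus d → ℝ} (hf : Continuous f) (μ : Measure (Torus d))
    [IsProbabilityMeasure μ] : Integrable f μ :=
  hf.integrable_of_hasCompactSupport (HasCompactSupport.of_compactSpace f)

lemma integral_trig (μ : Measure (Torus d)) [IsProbabilityMeasure μ] {n : ℕ}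
    (c : Fin n → ℂ) (Ξ : Fin n → (Fin d → ℤ)) :
    ∫ x, (∑ i, c i * ec (Ξ i) x) ∂μ = ∑ i, c i * mfc μ (-(Ξ i)) := by
  rw [integral_finset_sum]
  · refine Finset.sum_congr rfl fun i _ => ?_
    rw [MeasureTheory.integral_const_mul, mfc, neg_neg]
  · intro i _
    exact (cont_integrable (ec_continuous (Ξ i)) μ).const_mul (c i)

/-- Key quantitative lemma: near every point of the support of `μ₀` there is a point of the
support of any probability measure whose Fourier coefficients are sufficiently close. -/
lemma key (μ₀ : Measure (Torus d)) [IsProbabilityMeasure μ₀] {y : Torus d}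
    (hy : y ∈ msupport μ₀) {r : ℝ} (hr : 0 < r) :
    ∃ δ : ℝ, 0 < δ ∧ ∀ μ : Measure (Torus d), IsProbabilityMeasure μ →
      (∀ ξ : Fin d → ℤ, ‖mfc μ₀ ξ - mfc μ ξ‖ ≤ δ) →
      (msupport μ ∩ Metric.ball y r).Nonempty := by
  classical
  set g : Torus d → ℝ := fun x => max (1 - dist x y / r) 0 with hgdef
  have hgc : Continuous g :=
    (continuous_const.sub ((continuous_id.dist continuous_const).div_const r)).max continuous_const
  have hg0 : ∀ x, 0 ≤ g x := fun x => le_max_right _ _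
  have hsupp : Function.support g ⊆ Metric.ball y r := by
    intro x hx
    rw [Function.mem_support, hgdef] at hx
    have h1 : 0 < 1 - dist x y / r := by
      by_contra h
      push_neg at h
      exact hx (max_eq_right h)
    rw [Metric.mem_ball]
    exact (div_lt_one hr).mp (by linarith)
  have hball : Metric.ball y (r/2) ⊆ Function.support g := by
    intro x hx
    rw [Metric.mem_ball] at hx
    rw [Function.mem_support, hgdef]
    have : 0 < 1 - dist x y / r := by
      rw [sub_pos, div_lt_one hr]; linarith
    simp only [max_eq_left this.le]
    linarith
  have hint₀ : Integrable g μ₀ := cont_integrableR hgc μ₀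
  have hc : 0 < ∫ x, g x ∂μ₀ := by
    rw [integral_pos_iff_support_of_nonneg hg0 hint₀]
    have hne : μ₀ (Metric.ball y (r/2)) ≠ 0 := msupport_ball_ne_zero μ₀ hy (by linarith)
    have := measure_mono hball (μ := μ₀)
    exact lt_of_lt_of_le (pos_iff_ne_zero.mpr hne) this
  set c := ∫ x, g x ∂μ₀ with hcdef
  set F : C(Torus d, ℂ) := ⟨fun x => (g x : ℂ), Complex.continuous_ofReal.comp hgc⟩ with hFdef
  obtain ⟨n, co, Ξ, happ⟩ := trig_approx F (by positivity : (0:ℝ) < c/4)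
  set M := ∑ i, ‖co i‖ with hMdef
  have hM0 : 0 ≤ M := Finset.sum_nonneg fun i _ => norm_nonneg _
  refine ⟨c / (4 * (M + 1)), by positivity, ?_⟩
  intro μ hμ hfc
  haveI := hμ
  have hPdiff : ‖(∑ i, co i * mfc μ₀ (-(Ξ i))) - ∑ i, co i * mfc μ (-(Ξ i))‖ ≤ c/4 := by
    rw [← Finset.sum_sub_distrib]
    calc ‖∑ i, (co i * mfc μ₀ (-(Ξ i)) - co i * mfc μ (-(Ξ i)))‖
        ≤ ∑ i, ‖co i * mfc μ₀ (-(Ξ i)) - co i * mfc μ (-(Ξ i))‖ := norm_sum_le _ _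
      _ ≤ ∑ i, ‖co i‖ * (c / (4 * (M + 1))) := by
          refine Finset.sum_le_sum fun i _ => ?_
          rw [← mul_sub, norm_mul]
          exact mul_le_mul_of_nonneg_left (hfc _) (norm_nonneg _)
      _ = M * (c / (4 * (M + 1))) := by rw [← Finset.sum_mul]
      _ ≤ (M + 1) * (c / (4 * (M + 1))) := by
          have hpos : 0 < c / (4 * (M + 1)) := by positivity
          nlinarith
      _ = c/4 := by field_simp
  have approx_int : ∀ ν : Measure (Torus d), IsProbabilityMeasure ν →
      ‖(∫ x, F x ∂ν) - ∑ i, co i * mfc ν (-(Ξ i))‖ ≤ c/4 := by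
    intro ν hν
    haveI := hν
    rw [← integral_trig ν co Ξ, ← integral_sub (cont_integrable F.continuous ν)]
    · calc ‖∫ x, (F x - ∑ i, co i * ec (Ξ i) x) ∂ν‖
          ≤ (c/4) * (ν Set.univ).toReal :=
            norm_integral_le_of_norm_le_const (Filter.Eventually.of_forall fun x => happ x)
        _ = c/4 := by rw [measure_univ]; simp
    · exact cont_integrable (continuous_finset_sum _ fun i _ =>
        continuous_const.mul (ec_continuous (Ξ i))) ν
  have hFint : ∀ ν : Measure (Torus d), IsProbabilityMeasure ν →
      (∫ x, F x ∂ν) = ((∫ x, g x ∂ν : ℝ) : ℂ) := by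
    intro ν hν
    haveI := hν
    exact integral_ofReal
  have hclose : ‖(∫ x, F x ∂μ₀) - ∫ x, F x ∂μ‖ ≤ 3*c/4 := by
    have h1 := approx_int μ₀ inferInstance
    have h2 := approx_int μ hμ
    calc ‖(∫ x, F x ∂μ₀) - ∫ x, F x ∂μ‖
        = dist (∫ x, F x ∂μ₀) (∫ x, F x ∂μ) := (dist_eq_norm _ _).symm
      _ ≤ dist (∫ x, F x ∂μ₀) (∑ i, co i * mfc μ₀ (-(Ξ i)))
          + dist (∑ i, co i * mfc μ₀ (-(Ξ i))) (∑ i, co i * mfc μ (-(Ξ i)))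
          + dist (∑ i, co i * mfc μ (-(Ξ i))) (∫ x, F x ∂μ) := dist_triangle4 _ _ _ _
      _ = ‖(∫ x, F x ∂μ₀) - ∑ i, co i * mfc μ₀ (-(Ξ i))‖
          + ‖(∑ i, co i * mfc μ₀ (-(Ξ i))) - ∑ i, co i * mfc μ (-(Ξ i))‖
          + ‖(∑ i, co i * mfc μ (-(Ξ i))) - ∫ x, F x ∂μ‖ := by
            rw [dist_eq_norm, dist_eq_norm, dist_eq_norm]
      _ ≤ c/4 + c/4 + c/4 :=
          add_le_add (add_le_add h1 hPdiff) (by rw [norm_sub_rev]; exact h2)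
      _ = 3*c/4 := by ring
  have hgμ : 0 < ∫ x, g x ∂μ := by
    have hre : |(∫ x, g x ∂μ₀) - ∫ x, g x ∂μ| ≤ 3*c/4 := by
      have h := hclose
      rw [hFint μ₀ inferInstance, hFint μ hμ, ← Complex.ofReal_sub] at h
      rwa [Complex.norm_real, Real.norm_eq_abs] at h
    have h2 := (abs_le.mp hre).2
    have h3 : c - ∫ x, g x ∂μ ≤ 3*c/4 := by rw [hcdef] at h2 ⊢; linarith [h2]
    linarith
  rw [integral_pos_iff_support_of_nonneg hg0 (cont_integrableR hgc μ)] at hgμ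
  have hμball : μ (Metric.ball y r) ≠ 0 := by
    intro h0
    exact absurd (measure_mono_null hsupp h0) (ne_of_gt hgμ)
  exact open_inter_msupport μ Metric.isOpen_ball hμball

lemma mfc_zero (μ : Measure (Torus d)) [IsProbabilityMeasure μ] : mfc μ 0 = 1 := by
  rw [mfc, neg_zero]
  have h : (fun x : Torus d => ec (0 : Fin d → ℤ) x) = fun _ => (1:ℂ) := funext ec_zero
  rw [h, integral_const]
  simp

lemma one_le_znorm {ξ : Fin d → ℤ} (hξ : ξ ≠ 0) : 1 ≤ znorm ξ := by
  obtain ⟨j, hj⟩ := Function.ne_iff.mp hξ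
  have hj' : ξ j ≠ 0 := by simpa using hj
  have h1 : (1:ℝ) ≤ ((ξ j:ℝ))^2 := by
    have h := Int.one_le_abs hj'
    have : (1:ℝ) ≤ |((ξ j:ℝ))| := by exact_mod_cast h
    nlinarith [_root_.sq_abs ((ξ j:ℝ))]
  have h2 : (1:ℝ) ≤ ∑ i, ((ξ i:ℝ))^2 :=
    h1.trans (Finset.single_le_sum (f := fun i => ((ξ i:ℝ))^2)
      (fun i _ => sq_nonneg _) (Finset.mem_univ j))
  calc (1:ℝ) = Real.sqrt 1 := Real.sqrt_one.symm
    _ ≤ znorm ξ := Real.sqrt_le_sqrt h2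

end Stmt3Aux

open Stmt3Aux in
/-- For a fixed smooth probability measure `μ₀` and `λ ∈ [0,d)`: for every
`ε > 0` there is `δ > 0` such that any smooth probability measure `μ` with
`supp μ ⊆ supp μ₀` and `‖μ₀ - μ‖_{M(λ)} ≤ δ` satisfies
`d_H(supp μ, supp μ₀) ≤ ε`. -/
theorem stmt3 (d : ℕ) (hd : 0 < d) (μ₀ : Measure (Torus d)) (hμ₀ : IsSmoothProb μ₀)
    (lam : ℝ) (hlam0 : 0 ≤ lam) (hlamd : lam < d) :
    ∀ ε : ℝ, 0 < ε → ∃ δ : ℝ, 0 < δ ∧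
      ∀ μ : Measure (Torus d), IsSmoothProb μ → msupport μ ⊆ msupport μ₀ →
        (∀ ξ : Fin d → ℤ, ξ ≠ 0 → znorm ξ ^ (lam/2) * ‖mfc μ₀ ξ - mfc μ ξ‖ ≤ δ) →
        Metric.hausdorffDist (msupport μ) (msupport μ₀) ≤ ε := by
  intro ε hε
  obtain ⟨hp0, -⟩ := hμ₀
  haveI := hp0
  have hKc : IsCompact (msupport μ₀) := (msupport_closed μ₀).isCompact
  have hcov : msupport μ₀ ⊆ ⋃ y ∈ msupport μ₀, Metric.ball y (ε/2) := fun y hy =>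
    Set.mem_biUnion hy (Metric.mem_ball_self (by linarith))
  obtain ⟨t, htsub, htfin, htcov⟩ := hKc.elim_finite_subcover_image
    (fun y _ => Metric.isOpen_ball) hcov
  have hchoice : ∀ y ∈ t, ∃ δ : ℝ, 0 < δ ∧ ∀ μ : Measure (Torus d), IsProbabilityMeasure μ →
      (∀ ξ : Fin d → ℤ, ‖mfc μ₀ ξ - mfc μ ξ‖ ≤ δ) →
      (msupport μ ∩ Metric.ball y (ε/2)).Nonempty :=
    fun y hy => key μ₀ (htsub hy) (by linarith)
  choose! δf hδf hPf using hchoice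
  have htne : t.Nonempty := by
    obtain ⟨x, hx⟩ := msupport_nonempty μ₀
    obtain ⟨y, hy, -⟩ := Set.mem_iUnion₂.mp (htcov hx)
    exact ⟨y, hy⟩
  have hTne : htfin.toFinset.Nonempty := Set.Finite.toFinset_nonempty htfin |>.mpr htne
  set δ := htfin.toFinset.inf' hTne δf with hδdef
  have hδpos : 0 < δ :=
    (Finset.lt_inf'_iff hTne).mpr fun y hy => hδf y (htfin.mem_toFinset.mp hy)
  refine ⟨δ, hδpos, ?_⟩
  intro μ hμp hsub hfc
  obtain ⟨hμprob, -⟩ := hμp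
  haveI := hμprob
  have hall : ∀ ξ : Fin d → ℤ, ‖mfc μ₀ ξ - mfc μ ξ‖ ≤ δ := by
    intro ξ
    by_cases h : ξ = 0
    · subst h
      rw [mfc_zero μ₀, mfc_zero μ, sub_self, norm_zero]
      exact hδpos.le
    · have h1 := hfc ξ h
      have h2 : (1:ℝ) ≤ znorm ξ ^ (lam/2) := by
        calc (1:ℝ) = 1 ^ (lam/2) := (Real.one_rpow _).symm
          _ ≤ znorm ξ ^ (lam/2) :=
            Real.rpow_le_rpow zero_le_one (one_le_znorm h) (by linarith)
      calc ‖mfc μ₀ ξ - mfc μ ξ‖ = 1 * ‖mfc μ₀ ξ - mfc μ ξ‖ := (one_mul _).symm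
        _ ≤ znorm ξ ^ (lam/2) * ‖mfc μ₀ ξ - mfc μ ξ‖ :=
            mul_le_mul_of_nonneg_right h2 (norm_nonneg _)
        _ ≤ δ := h1
  apply Metric.hausdorffDist_le_of_mem_dist hε.le
  · intro x hx
    exact ⟨x, hsub hx, by rw [dist_self]; exact hε.le⟩
  · intro y hy
    obtain ⟨z, hzt, hyz⟩ := Set.mem_iUnion₂.mp (htcov hy)
    have hδz : δ ≤ δf z := Finset.inf'_le δf (htfin.mem_toFinset.mpr hzt)
    obtain ⟨w, hwsupp, hwball⟩ := hPf z hzt μ hμprob (fun ξ => (hall ξ).trans hδz)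
    refine ⟨w, hwsupp, ?_⟩
    rw [Metric.mem_ball] at hyz hwball
    calc dist y w ≤ dist y z + dist z w := dist_triangle _ _ _
      _ = dist y z + dist w z := by rw [dist_comm z w]
      _ ≤ ε := by linarith
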